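/- Let φ be the anti-automorphism of H_n(0) determined by φ(T_i) = T_i for all i. Then for every permutation τ ∈ S_n (used as spectral word), φ(Y_{ω_n}(τ)) = Y_{ω_n}(\overline{τ}^{\#}), where ω_n = (n,…,1), \overline{τ} := τ ω_n and τ^{\#} := ω_n τ. Consequently, for every composition I of n, φ(η_I) = η_{\overline{I}}, where η_I = Y_{ω_n}(τ) for any τ with \overline{C(τ)} = I and \overline{I} is the mirror image of I. -/

import Mathlib

/-!
STATEMENT 5: Let `φ` be the anti-automorphism of `H_n(0)` determined by
`φ(T_i) = T_i`.  Then for every permutation `τ` (used as spectral word),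
`φ(Y_{ω_n}(τ)) = Y_{ω_n}(‾τ^#)` where `ω_n = (n,…,1)`, `‾τ := τ ω_n`,
`τ^# := ω_n τ`.  Consequently, for every composition `I` of `n`,
`φ(η_I) = η_{‾I}`, where `η_I = Y_{ω_n}(τ)` for any `τ` with `‾C(τ) = I` and
`‾I` is the mirror image of `I`.

The condition `‾C(τ) = I` is expressed through descent sets (0-indexed): `i` is a
descent of `I` iff `n-2-i` is a descent of `τ`; likewise `‾C(τ') = ‾I` is
equivalent to: `i` is a descent of `I` iff `i` is a descent of `τ'`.
-/

namespace AKSPaper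

noncomputable section

/-- Defining relations of the 0-Hecke algebra `H_n(0)`.  The generator indexed by
`i : Fin (n-1)` is `T_{i+1}` (1-indexed), acting on 0-indexed positions `i, i+1`. -/
inductive HeckeRel (n : ℕ) :
    FreeAlgebra ℂ (Fin (n - 1)) → FreeAlgebra ℂ (Fin (n - 1)) → Prop
  | quad (i : Fin (n - 1)) :
      HeckeRel n (FreeAlgebra.ι ℂ i * (1 + FreeAlgebra.ι ℂ i)) 0
  | braid (i j : Fin (n - 1)) (h : (i : ℕ) + 1 = j) :
      HeckeRel n (FreeAlgebra.ι ℂ i * FreeAlgebra.ι ℂ j * FreeAlgebra.ι ℂ i)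
        (FreeAlgebra.ι ℂ j * FreeAlgebra.ι ℂ i * FreeAlgebra.ι ℂ j)
  | comm (i j : Fin (n - 1)) (h : (i : ℕ) + 2 ≤ j ∨ (j : ℕ) + 2 ≤ i) :
      HeckeRel n (FreeAlgebra.ι ℂ i * FreeAlgebra.ι ℂ j)
        (FreeAlgebra.ι ℂ j * FreeAlgebra.ι ℂ i)

/-- The 0-Hecke algebra `H_n(0)`. -/
abbrev H (n : ℕ) := RingQuot (HeckeRel n)

/-- The generator `T_{i+1}` of `H_n(0)`. -/
def Tgen {n : ℕ} (i : Fin (n - 1)) : H n :=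
  RingQuot.mkAlgHom ℂ (HeckeRel n) (FreeAlgebra.ι ℂ i)

/-- The generator `T` acting on the 0-indexed positions `j`, `j+1`. -/
def Tpos {n : ℕ} (j : ℕ) (h : j + 1 < n) : H n := Tgen ⟨j, by omega⟩

/-- The elementary transposition exchanging the 0-indexed positions `j`, `j+1`. -/
def sw {n : ℕ} (j : ℕ) (h : j + 1 < n) : Equiv.Perm (Fin n) :=
  Equiv.swap ⟨j, by omega⟩ ⟨j + 1, h⟩

/-- The number of inversions of a permutation. -/
def invnum {n : ℕ} (σ : Equiv.Perm (Fin n)) : ℕ :=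
  (Finset.univ.filter fun p : Fin n × Fin n => p.1 < p.2 ∧ σ p.2 < σ p.1).card

/-- The Yang-Baxter element `Y_j(t, u)`: `T_j` if `t > u`, `1 + T_j` if `t ≤ u`. -/
def Ygen {n : ℕ} {α : Type*} [LinearOrder α] (j : ℕ) (h : j + 1 < n) (t u : α) : H n :=
  if t ≤ u then 1 + Tpos j h else Tpos j h

/-- `Y` is the family of Yang-Baxter basis elements: `Y_id(x) = 1` and
`Y_{s_j τ}(x) = Y_j(x_{τ⁻¹(j)}, x_{τ⁻¹(j+1)}) * Y_τ(x)` whenever `s_j τ` has one more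
inversion than `τ`. -/
def IsYBFamily {n : ℕ} {α : Type*} [LinearOrder α]
    (Y : Equiv.Perm (Fin n) → (Fin n → α) → H n) : Prop :=
  (∀ x, Y 1 x = 1) ∧
  ∀ (j : ℕ) (h : j + 1 < n) (τ : Equiv.Perm (Fin n)) (x : Fin n → α),
    invnum (sw j h * τ) = invnum τ + 1 →
    Y (sw j h * τ) x =
      Ygen j h (x (τ⁻¹ ⟨j, by omega⟩)) (x (τ⁻¹ ⟨j + 1, h⟩)) * Y τ x

/-- `i` (0-indexed, `i+1 < n`) is a descent of the permutation `σ`. -/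
def descPerm {n : ℕ} (σ : Equiv.Perm (Fin n)) (i : ℕ) : Prop :=
  ∃ h : i + 1 < n, σ ⟨i + 1, h⟩ < σ ⟨i, by omega⟩

/-- `i` (0-indexed) is a descent of the composition `I` of `n`. -/
def descComp {n : ℕ} (I : Composition n) (i : ℕ) : Prop :=
  i + 1 < n ∧ ∃ k ∈ Finset.range (n + 1), (I.blocks.take k).sum = i + 1


section Proofs
variable {n : ℕ}

variable {n : ℕ}

lemma Equiv.Perm.apply_inv_self {α : Type*} (f : Equiv.Perm α) (x : α) : f (f⁻¹ x) = x :=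
  Equiv.apply_symm_apply f x

lemma Equiv.Perm.inv_apply_self {α : Type*} (f : Equiv.Perm α) (x : α) : f⁻¹ (f x) = x :=
  Equiv.symm_apply_apply f x

abbrev Lam (n : ℕ) := {j : ℕ // j + 1 < n}

def jf (a : Lam n) : Fin n := ⟨a.1, by omega⟩
def j1f (a : Lam n) : Fin n := ⟨a.1 + 1, a.2⟩

def swl (a : Lam n) : Equiv.Perm (Fin n) := sw a.1 a.2

lemma swl_eq (a : Lam n) : swl a = Equiv.swap (jf a) (j1f a) := rfl

lemma jf_lt_j1f (a : Lam n) : jf a < j1f a := by simp [jf, j1f, Fin.lt_def]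

def InvP (σ : Equiv.Perm (Fin n)) : Finset (Fin n × Fin n) :=
  Finset.univ.filter fun p => p.1 < p.2 ∧ σ p.2 < σ p.1

lemma invnum_eq (σ : Equiv.Perm (Fin n)) : invnum σ = (InvP σ).card := rfl

lemma swap_val (v v' z : Fin n) :
    ((Equiv.swap v v' z : Fin n) : ℕ) = if z = v then (v' : ℕ) else if z = v' then (v : ℕ) else (z : ℕ) := by
  split_ifs with h1 h2
  · rw [h1, Equiv.swap_apply_left]
  · rw [h2, Equiv.swap_apply_right]
  · rw [Equiv.swap_apply_of_ne_of_ne h1 h2]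

lemma swap_consec_lt {v v' : Fin n} (hv : (v : ℕ) + 1 = (v' : ℕ)) {x y : Fin n} (hxy : x < y) :
    Equiv.swap v v' y < Equiv.swap v v' x ↔ (x = v ∧ y = v') := by
  have hx := swap_val v v' x
  have hy := swap_val v v' y
  rw [Fin.lt_def] at hxy ⊢
  rw [hx, hy]
  simp only [Fin.ext_iff]
  split_ifs at * <;> omega

lemma invP_vswap {v v' : Fin n} (hv : (v : ℕ) + 1 = (v' : ℕ)) (τ : Equiv.Perm (Fin n))
    (h : τ⁻¹ v < τ⁻¹ v') :
    InvP (Equiv.swap v v' * τ) = insert (τ⁻¹ v, τ⁻¹ v') (InvP τ) := by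
  have hvlt : v < v' := by rw [Fin.lt_def]; omega
  ext p
  simp only [InvP, Finset.mem_insert, Finset.mem_filter, Finset.mem_univ, true_and,
    Prod.ext_iff]
  simp only [Equiv.Perm.mul_apply]
  constructor
  · rintro ⟨hlt, hsw⟩
    rcases lt_trichotomy (τ p.1) (τ p.2) with hc | hc | hc
    · have hh := (swap_consec_lt hv hc).mp hsw
      left
      constructor
      · rw [← hh.1, Equiv.Perm.inv_apply_self]
      · rw [← hh.2, Equiv.Perm.inv_apply_self]
    · exact absurd (τ.injective hc) (ne_of_lt hlt)
    · exact Or.inr ⟨hlt, hc⟩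
  · rintro (⟨h1, h2⟩ | ⟨hlt, hinv⟩)
    · have hp1 : τ p.1 = v := by rw [h1, Equiv.Perm.apply_inv_self]
      have hp2 : τ p.2 = v' := by rw [h2, Equiv.Perm.apply_inv_self]
      refine ⟨by rw [h1, h2]; exact h, ?_⟩
      rw [hp1, hp2, Equiv.swap_apply_left, Equiv.swap_apply_right]
      exact hvlt
    · refine ⟨hlt, ?_⟩
      rcases lt_trichotomy (Equiv.swap v v' (τ p.2)) (Equiv.swap v v' (τ p.1)) with hc | hc | hc
      · exact hc
      · exact absurd (τ.injective ((Equiv.swap v v').injective hc))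
          (ne_of_lt hlt).symm
      · exfalso
        have hh := (swap_consec_lt hv hinv).mp hc
        have : p.2 = τ⁻¹ v := by rw [← hh.1, Equiv.Perm.inv_apply_self]
        have h2 : p.1 = τ⁻¹ v' := by rw [← hh.2, Equiv.Perm.inv_apply_self]
        rw [this, h2] at hlt
        exact absurd (hlt.trans h) (lt_irrefl _)

lemma inv_vswap_step {v v' : Fin n} (hv : (v : ℕ) + 1 = (v' : ℕ)) (τ : Equiv.Perm (Fin n))
    (h : τ⁻¹ v < τ⁻¹ v') :
    invnum (Equiv.swap v v' * τ) = invnum τ + 1 := by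
  rw [invnum_eq, invnum_eq, invP_vswap hv τ h, Finset.card_insert_of_notMem]
  intro hmem
  simp only [InvP, Finset.mem_filter, Finset.mem_univ, true_and] at hmem
  rw [Equiv.Perm.apply_inv_self, Equiv.Perm.apply_inv_self] at hmem
  have : v < v' := by rw [Fin.lt_def]; omega
  exact absurd (hmem.2.trans this) (lt_irrefl _)

lemma jf_consec (a : Lam n) : ((jf a : Fin n) : ℕ) + 1 = ((j1f a : Fin n) : ℕ) := rfl

lemma inv_step (a : Lam n) (τ : Equiv.Perm (Fin n)) (h : τ⁻¹ (jf a) < τ⁻¹ (j1f a)) :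
    invnum (swl a * τ) = invnum τ + 1 := by
  rw [swl_eq]; exact inv_vswap_step (jf_consec a) τ h

lemma swl_invol (a : Lam n) : swl a * swl a = 1 := by
  rw [swl_eq]; exact Equiv.swap_mul_self _ _

lemma swl_inv (a : Lam n) : (swl a)⁻¹ = swl a := by
  rw [swl_eq]; exact Equiv.swap_inv _ _

lemma inv_step_gt (a : Lam n) (τ : Equiv.Perm (Fin n)) (h : τ⁻¹ (j1f a) < τ⁻¹ (jf a)) :
    invnum τ = invnum (swl a * τ) + 1 := by
  set τ' := swl a * τ with hτ'
  have h1 : swl a * τ' = τ := by rw [hτ', ← mul_assoc, swl_invol, one_mul]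
  have h2 : τ'⁻¹ (jf a) < τ'⁻¹ (j1f a) := by
    have e1 : τ'⁻¹ (jf a) = τ⁻¹ (j1f a) := by
      rw [hτ', mul_inv_rev, Equiv.Perm.mul_apply, swl_inv, swl_eq, Equiv.swap_apply_left]
    have e2 : τ'⁻¹ (j1f a) = τ⁻¹ (jf a) := by
      rw [hτ', mul_inv_rev, Equiv.Perm.mul_apply, swl_inv, swl_eq, Equiv.swap_apply_right]
    rw [e1, e2]; exact h
  rw [← h1]; exact inv_step a τ' h2

def listPerm (L : List (Lam n)) : Equiv.Perm (Fin n) := (L.map swl).prod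

@[simp] lemma listPerm_nil : listPerm ([] : List (Lam n)) = 1 := rfl

@[simp] lemma listPerm_cons (a : Lam n) (L : List (Lam n)) :
    listPerm (a :: L) = swl a * listPerm L := by
  simp [listPerm]

lemma listPerm_append (A B : List (Lam n)) :
    listPerm (A ++ B) = listPerm A * listPerm B := by
  simp [listPerm]

lemma jf_ne_j1f (a : Lam n) : jf a ≠ j1f a := by
  simp [jf, j1f, Fin.ext_iff]

lemma step_trichotomy (a : Lam n) (τ : Equiv.Perm (Fin n)) :
    τ⁻¹ (jf a) < τ⁻¹ (j1f a) ∨ τ⁻¹ (j1f a) < τ⁻¹ (jf a) := by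
  rcases lt_trichotomy (τ⁻¹ (jf a)) (τ⁻¹ (j1f a)) with h | h | h
  · exact Or.inl h
  · exact absurd (τ⁻¹.injective h) (jf_ne_j1f a)
  · exact Or.inr h

lemma inv_le_base (L : List (Lam n)) (ρ : Equiv.Perm (Fin n)) :
    invnum (listPerm L * ρ) ≤ L.length + invnum ρ := by
  induction L with
  | nil => simp
  | cons a L ih =>
    rw [listPerm_cons, mul_assoc]
    rcases step_trichotomy a (listPerm L * ρ) with h | h
    · rw [inv_step a (listPerm L * ρ) h]
      simp only [List.length_cons]
      omega
    · have := inv_step_gt a (listPerm L * ρ) h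
      simp only [List.length_cons]
      omega

/-- `L` is a reduced chain over base `ρ`. -/
def Red (L : List (Lam n)) (ρ : Equiv.Perm (Fin n)) : Prop :=
  invnum (listPerm L * ρ) = L.length + invnum ρ

lemma red_nil (ρ : Equiv.Perm (Fin n)) : Red ([] : List (Lam n)) ρ := by
  simp [Red]

lemma red_cons {L : List (Lam n)} {a : Lam n} {ρ : Equiv.Perm (Fin n)} (h : Red (a :: L) ρ) :
    Red L ρ ∧ (listPerm L * ρ)⁻¹ (jf a) < (listPerm L * ρ)⁻¹ (j1f a) := by
  unfold Red at h ⊢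
  rw [listPerm_cons, mul_assoc] at h
  have hle := inv_le_base L ρ
  rcases step_trichotomy a (listPerm L * ρ) with hlt | hlt
  · have h2 := inv_step a (listPerm L * ρ) hlt
    simp only [List.length_cons] at h
    exact ⟨by omega, hlt⟩
  · have h2 := inv_step_gt a (listPerm L * ρ) hlt
    simp only [List.length_cons] at h
    omega

lemma red_cons_step {L : List (Lam n)} {a : Lam n} {ρ : Equiv.Perm (Fin n)} (h : Red (a :: L) ρ) :
    invnum (swl a * (listPerm L * ρ)) = invnum (listPerm L * ρ) + 1 :=
  inv_step a _ (red_cons h).2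

lemma invP_mono_step (a : Lam n) (τ : Equiv.Perm (Fin n)) (h : τ⁻¹ (jf a) < τ⁻¹ (j1f a)) :
    InvP τ ⊆ InvP (swl a * τ) := by
  rw [swl_eq, invP_vswap (jf_consec a) τ h]
  exact Finset.subset_insert _ _

lemma invP_mono_chain {L : List (Lam n)} {ρ : Equiv.Perm (Fin n)} (h : Red L ρ) :
    InvP ρ ⊆ InvP (listPerm L * ρ) := by
  induction L with
  | nil => simp
  | cons a L ih =>
    obtain ⟨h1, h2⟩ := red_cons h
    rw [listPerm_cons, mul_assoc]
    exact (ih h1).trans (invP_mono_step a _ h2)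

lemma invP_one : InvP (1 : Equiv.Perm (Fin n)) = ∅ := by
  ext p
  simp only [InvP, Finset.mem_filter, Finset.mem_univ, true_and,
    Finset.notMem_empty, iff_false, not_and]
  simp only [Equiv.Perm.one_apply]
  intro h1 h2
  exact absurd (h1.trans h2) (lt_irrefl _)

lemma invnum_one : invnum (1 : Equiv.Perm (Fin n)) = 0 := by
  rw [invnum_eq, invP_one, Finset.card_empty]

lemma mono_eq_one (σ : Equiv.Perm (Fin n)) (hm : ∀ p q : Fin n, p < q → σ p < σ q) : σ = 1 := by
  have hinv : ∀ p q : Fin n, p < q → σ⁻¹ p < σ⁻¹ q := by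
    intro p q h
    rcases lt_trichotomy (σ⁻¹ p) (σ⁻¹ q) with hc | hc | hc
    · exact hc
    · rw [σ⁻¹.injective hc] at h; exact absurd h (lt_irrefl _)
    · have := hm _ _ hc
      rw [Equiv.Perm.apply_inv_self, Equiv.Perm.apply_inv_self] at this
      exact absurd (h.trans this) (lt_irrefl _)
  have key : ∀ (f : Equiv.Perm (Fin n)), (∀ p q : Fin n, p < q → f p < f q) →
      ∀ k (hk : k < n), k ≤ ((f ⟨k, hk⟩ : Fin n) : ℕ) := by
    intro f hf k
    induction k with
    | zero => intro hk; exact Nat.zero_le _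
    | succ m ih =>
      intro hk
      have hm' : m < n := by omega
      have h1 := ih hm'
      have h2 : f ⟨m, hm'⟩ < f ⟨m + 1, hk⟩ := hf _ _ (by simp [Fin.lt_def])
      rw [Fin.lt_def] at h2
      omega
  ext i
  have h1 : (i : ℕ) ≤ σ i := by
    have := key σ hm i.1 i.2
    simpa using this
  have h2 : ((σ i : Fin n) : ℕ) ≤ i := by
    have := key σ⁻¹ hinv (σ i).1 (σ i).2
    simp only [Fin.eta] at this
    rw [Equiv.Perm.inv_apply_self] at this
    exact this
  exact le_antisymm h2 h1

lemma exists_desc {σ : Equiv.Perm (Fin n)} (hσ : σ ≠ 1) :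
    ∃ a : Lam n, σ (j1f a) < σ (jf a) := by
  by_contra hc
  push_neg at hc
  have hadj : ∀ a : Lam n, σ (jf a) < σ (j1f a) := by
    intro a
    rcases lt_trichotomy (σ (jf a)) (σ (j1f a)) with h | h | h
    · exact h
    · exact absurd (σ.injective h) (jf_ne_j1f a)
    · exact absurd h (not_lt.mpr (hc a))
  have hmono : ∀ (d k : ℕ) (h : k + d + 1 < n), σ ⟨k, by omega⟩ < σ ⟨k + d + 1, h⟩ := by
    intro d
    induction d with
    | zero => intro k h; exact hadj ⟨k, h⟩
    | succ m ih =>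
      intro k h
      have h1 : k + m + 1 < n := by omega
      have h2 := ih k h1
      have h3 : σ ⟨k + m + 1, h1⟩ < σ ⟨k + m + 2, by omega⟩ := hadj ⟨k + m + 1, by omega⟩
      exact h2.trans h3
  apply hσ
  apply mono_eq_one
  intro p q hpq
  have hq : (p : ℕ) + ((q : ℕ) - p - 1) + 1 = q := by rw [Fin.lt_def] at hpq; omega
  have hlt2 : (p : ℕ) + ((q : ℕ) - (p : ℕ) - 1) + 1 < n := by rw [hq]; exact q.2
  have := hmono ((q : ℕ) - (p : ℕ) - 1) (p : ℕ) hlt2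
  have e2 : (⟨(p : ℕ) + ((q : ℕ) - (p : ℕ) - 1) + 1, hlt2⟩ : Fin n) = q := Fin.ext hq
  rw [e2] at this
  simpa [Fin.eta] using this

lemma exists_peel {σ : Equiv.Perm (Fin n)} (hσ : σ ≠ 1) :
    ∃ (a : Lam n) (τ : Equiv.Perm (Fin n)), σ = swl a * τ ∧ invnum σ = invnum τ + 1 := by
  have hσ' : σ⁻¹ ≠ 1 := by
    intro h; apply hσ; rw [← inv_inv σ, h, inv_one]
  obtain ⟨a, ha⟩ := exists_desc hσ'
  refine ⟨a, swl a * σ, ?_, ?_⟩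
  · rw [← mul_assoc, swl_eq, Equiv.swap_mul_self, one_mul]
  · set τ := swl a * σ with hτ
    have hcond : τ⁻¹ (jf a) < τ⁻¹ (j1f a) := by
      have e1 : τ⁻¹ (jf a) = σ⁻¹ (j1f a) := by
        rw [hτ, mul_inv_rev, Equiv.Perm.mul_apply, swl_eq, Equiv.swap_inv, Equiv.swap_apply_left]
      have e2 : τ⁻¹ (j1f a) = σ⁻¹ (jf a) := by
        rw [hτ, mul_inv_rev, Equiv.Perm.mul_apply, swl_eq, Equiv.swap_inv, Equiv.swap_apply_right]
      rw [e1, e2]; exact ha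
    have := inv_step a τ hcond
    have hs : swl a * τ = σ := by rw [hτ, ← mul_assoc, swl_eq, Equiv.swap_mul_self, one_mul]
    rw [hs] at this
    exact this

lemma exists_word (σ : Equiv.Perm (Fin n)) :
    ∃ L : List (Lam n), listPerm L = σ ∧ invnum σ = L.length := by
  generalize hk : invnum σ = k
  induction k generalizing σ with
  | zero =>
    refine ⟨[], ?_, rfl⟩
    simp only [listPerm_nil]
    by_contra hne
    obtain ⟨a, τ, h1, h2⟩ := exists_peel (fun hc => hne (hc ▸ rfl))
    omega
  | succ m ih =>
    have hσ : σ ≠ 1 := by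
      intro h; rw [h, invnum_one] at hk; omega
    obtain ⟨a, τ, h1, h2⟩ := exists_peel hσ
    obtain ⟨L, hL1, hL2⟩ := ih τ (by omega)
    exact ⟨a :: L, by rw [listPerm_cons, hL1, h1], by simp only [List.length_cons]; omega⟩

lemma red_of_word {L : List (Lam n)} {σ : Equiv.Perm (Fin n)} (h1 : listPerm L = σ)
    (h2 : invnum σ = L.length) : Red L 1 := by
  unfold Red
  rw [mul_one, h1, invnum_one, h2]
  omega

lemma invnum_inv (σ : Equiv.Perm (Fin n)) : invnum σ⁻¹ = invnum σ := by
  rw [invnum_eq, invnum_eq]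
  symm
  apply Finset.card_bij' (fun p _ => ((σ p.2, σ p.1) : Fin n × Fin n))
    (fun q _ => ((σ⁻¹ q.2, σ⁻¹ q.1) : Fin n × Fin n))
  · intro p hp
    simp only [InvP, Finset.mem_filter, Finset.mem_univ, true_and] at hp ⊢
    rw [Equiv.Perm.inv_apply_self, Equiv.Perm.inv_apply_self]
    exact ⟨hp.2, hp.1⟩
  · intro q hq
    simp only [InvP, Finset.mem_filter, Finset.mem_univ, true_and] at hq ⊢
    rw [Equiv.Perm.apply_inv_self, Equiv.Perm.apply_inv_self]
    exact ⟨hq.2, hq.1⟩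
  · intro p hp; simp
  · intro q hq; simp

lemma invP_rev_mul (μ : Equiv.Perm (Fin n)) :
    invnum (Fin.revPerm * μ) + invnum μ = invnum (Fin.revPerm : Equiv.Perm (Fin n)) := by
  classical
  rw [invnum_eq, invnum_eq, invnum_eq]
  have h1 : InvP (Fin.revPerm * μ) =
      Finset.univ.filter fun p : Fin n × Fin n => p.1 < p.2 ∧ μ p.1 < μ p.2 := by
    ext p
    simp only [InvP, Finset.mem_filter, Finset.mem_univ, true_and, Equiv.Perm.mul_apply,
      Fin.revPerm_apply, Fin.rev_lt_rev]
  have h2 : InvP (Fin.revPerm : Equiv.Perm (Fin n)) =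
      Finset.univ.filter fun p : Fin n × Fin n => p.1 < p.2 := by
    ext p
    simp only [InvP, Finset.mem_filter, Finset.mem_univ, true_and, Fin.revPerm_apply,
      Fin.rev_lt_rev, and_self]
  rw [h1, h2]
  unfold InvP
  rw [← Finset.filter_filter, ← Finset.filter_filter]
  set base := Finset.univ.filter fun p : Fin n × Fin n => p.1 < p.2 with hbase
  have : Finset.filter (fun p : Fin n × Fin n => μ p.2 < μ p.1) base =
      Finset.filter (fun p => ¬ (μ p.1 < μ p.2)) base := by
    apply Finset.filter_congr
    intro p hp
    rw [hbase, Finset.mem_filter] at hp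
    have hne : μ p.1 ≠ μ p.2 := fun hc => absurd (μ.injective hc) (ne_of_lt hp.2)
    constructor
    · intro h; simp; exact le_of_lt h
    · intro h; simp only [not_lt] at h; exact lt_of_le_of_ne h (Ne.symm hne)
  rw [this]
  exact Finset.card_filter_add_card_filter_not _

/-! ### Algebra facts in `H n` -/

lemma T_quad (j : ℕ) (h : j + 1 < n) : Tpos j h * (1 + Tpos j h) = 0 := by
  have hrel := RingQuot.mkAlgHom_rel ℂ (HeckeRel.quad (⟨j, by omega⟩ : Fin (n - 1)))
  simpa [map_mul, map_add, map_one, map_zero, Tpos, Tgen] using hrel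

lemma T_sq (j : ℕ) (h : j + 1 < n) : Tpos j h * Tpos j h = - Tpos j h := by
  have := T_quad j h
  rw [mul_add, mul_one] at this
  exact eq_neg_of_add_eq_zero_right this

lemma T_quad' (j : ℕ) (h : j + 1 < n) : (1 + Tpos j h) * Tpos j h = 0 := by
  rw [add_mul, one_mul, T_sq j h]
  simp

/-! ### The product `Yprod` along a word, with base permutation -/

def Yprod : List (Lam n) → Equiv.Perm (Fin n) → (Fin n → Fin n) → H n
  | [], _, _ => 1
  | a :: L, ρ, x =>
    Ygen a.1 a.2 (x ((listPerm L * ρ)⁻¹ (jf a))) (x ((listPerm L * ρ)⁻¹ (j1f a))) *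
      Yprod L ρ x

@[simp] lemma Yprod_nil (ρ : Equiv.Perm (Fin n)) (x : Fin n → Fin n) :
    Yprod ([] : List (Lam n)) ρ x = 1 := rfl

lemma Yprod_cons (a : Lam n) (L : List (Lam n)) (ρ : Equiv.Perm (Fin n)) (x : Fin n → Fin n) :
    Yprod (a :: L) ρ x =
      Ygen a.1 a.2 (x ((listPerm L * ρ)⁻¹ (jf a))) (x ((listPerm L * ρ)⁻¹ (j1f a))) *
        Yprod L ρ x := rfl

lemma Yprod_append (A B : List (Lam n)) (ρ : Equiv.Perm (Fin n)) (x : Fin n → Fin n) :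
    Yprod (A ++ B) ρ x = Yprod A (listPerm B * ρ) x * Yprod B ρ x := by
  induction A with
  | nil => simp
  | cons a A ih =>
    rw [List.cons_append, Yprod_cons, Yprod_cons, ih, mul_assoc]
    congr 2 <;> rw [listPerm_append, mul_assoc]

lemma Y_eq_Yprod {Y : Equiv.Perm (Fin n) → (Fin n → Fin n) → H n} (hY : IsYBFamily Y)
    {L : List (Lam n)} (hL : Red L 1) (x : Fin n → Fin n) :
    Y (listPerm L) x = Yprod L 1 x := by
  induction L with
  | nil => simpa using hY.1 x
  | cons a L ih =>
    obtain ⟨h1, h2⟩ := red_cons hL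
    rw [mul_one] at h2
    have hstep : invnum (sw a.1 a.2 * listPerm L) = invnum (listPerm L) + 1 := inv_step a _ h2
    have := hY.2 a.1 a.2 (listPerm L) x hstep
    rw [listPerm_cons]
    show Y (sw a.1 a.2 * listPerm L) x = _
    rw [this, ih h1, Yprod_cons, mul_one]
    rfl

/-! ### The anti-automorphism and reversal -/

lemma phi_Tpos (φ : H n →ₐ[ℂ] (H n)ᵐᵒᵖ) (hφ : ∀ i, φ (Tgen i) = MulOpposite.op (Tgen i))
    (j : ℕ) (h : j + 1 < n) : φ (Tpos j h) = MulOpposite.op (Tpos j h) := hφ _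

lemma phi_Ygen (φ : H n →ₐ[ℂ] (H n)ᵐᵒᵖ) (hφ : ∀ i, φ (Tgen i) = MulOpposite.op (Tgen i))
    (j : ℕ) (h : j + 1 < n) (t u : Fin n) :
    φ (Ygen j h t u) = MulOpposite.op (Ygen j h t u) := by
  unfold Ygen
  split_ifs
  · rw [map_add, map_one, phi_Tpos φ hφ, MulOpposite.op_add, MulOpposite.op_one]
  · exact phi_Tpos φ hφ j h

lemma Ygen_rev (j : ℕ) (h : j + 1 < n) (t u : Fin n) :
    Ygen j h (Fin.rev u) (Fin.rev t) = Ygen j h t u := by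
  unfold Ygen
  simp only [Fin.rev_le_rev]

lemma rev_phi (φ : H n →ₐ[ℂ] (H n)ᵐᵒᵖ) (hφ : ∀ i, φ (Tgen i) = MulOpposite.op (Tgen i))
    (L : List (Lam n)) (ρ π : Equiv.Perm (Fin n)) (x : Fin n → Fin n) :
    φ (Yprod L ρ x) =
      MulOpposite.op (Yprod L.reverse (listPerm L * ρ * π) (fun i => (x (π i)).rev)) := by
  induction L generalizing ρ with
  | nil => simp
  | cons a L ih =>
    rw [Yprod_cons, map_mul, phi_Ygen φ hφ, ih]
    rw [List.reverse_cons, Yprod_append]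
    rw [← MulOpposite.op_mul]
    congr 1
    have hB : listPerm [a] * (listPerm (a :: L) * ρ * π) = listPerm L * ρ * π := by
      simp only [listPerm_cons, listPerm]
      simp only [List.map_cons, List.map_nil, List.prod_cons, List.prod_nil, mul_one]
      rw [← mul_assoc, ← mul_assoc, ← mul_assoc, swl_invol, one_mul]
    rw [hB]
    congr 1
    -- remaining: Yprod [a] (listPerm (a::L) * ρ * π) x' = Ygen a.1 a.2 t u
    rw [Yprod_cons, Yprod_nil, mul_one, listPerm_nil, one_mul]
    have hBinv : ∀ v : Fin n,
        π ((listPerm (a :: L) * ρ * π)⁻¹ v) = (listPerm L * ρ)⁻¹ (swl a v) := by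
      intro v
      simp only [listPerm_cons, mul_inv_rev, Equiv.Perm.mul_apply]
      rw [Equiv.Perm.apply_inv_self]
      rw [swl_inv]
    rw [hBinv, hBinv]
    rw [swl_eq, Equiv.swap_apply_left, Equiv.swap_apply_right]
    exact (Ygen_rev a.1 a.2 _ _).symm

lemma listPerm_reverse (L : List (Lam n)) : listPerm L.reverse = (listPerm L)⁻¹ := by
  induction L with
  | nil => simp
  | cons a L ih =>
    have h1 : listPerm [a] = swl a := by simp [listPerm]
    rw [List.reverse_cons, listPerm_append, ih, h1, listPerm_cons, mul_inv_rev, swl_inv]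

lemma revPerm_sq : (Fin.revPerm : Equiv.Perm (Fin n)) * Fin.revPerm = 1 := by
  ext i
  simp

lemma revPerm_inv : (Fin.revPerm : Equiv.Perm (Fin n))⁻¹ = Fin.revPerm := by
  rw [inv_eq_iff_mul_eq_one]
  exact revPerm_sq

/-- Part 1 of the theorem. -/
lemma part1 {Y : Equiv.Perm (Fin n) → (Fin n → Fin n) → H n} (hY : IsYBFamily Y)
    (φ : H n →ₐ[ℂ] (H n)ᵐᵒᵖ) (hφ : ∀ i, φ (Tgen i) = MulOpposite.op (Tgen i))
    (τ : Equiv.Perm (Fin n)) :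
    φ (Y Fin.revPerm ⇑τ) =
      MulOpposite.op (Y Fin.revPerm ⇑((Fin.revPerm * (τ * Fin.revPerm) : Equiv.Perm (Fin n)))) := by
  obtain ⟨L, hL1, hL2⟩ := exists_word (Fin.revPerm : Equiv.Perm (Fin n))
  have hred : Red L 1 := red_of_word hL1 hL2
  have hrev1 : listPerm L.reverse = (Fin.revPerm : Equiv.Perm (Fin n)) := by
    rw [listPerm_reverse, hL1, revPerm_inv]
  have hredrev : Red L.reverse 1 := by
    apply red_of_word hrev1
    rw [← hrev1, listPerm_reverse, invnum_inv, hL1, hL2, List.length_reverse]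
  have hx : (fun i => (τ (Fin.revPerm i)).rev) =
      ⇑((Fin.revPerm * (τ * Fin.revPerm) : Equiv.Perm (Fin n))) := by
    funext i
    simp [Equiv.Perm.mul_apply]
  have hbase : listPerm L * 1 * Fin.revPerm = 1 := by
    rw [mul_one, hL1, revPerm_sq]
  calc φ (Y Fin.revPerm ⇑τ) = φ (Yprod L 1 ⇑τ) := by rw [← hL1, Y_eq_Yprod hY hred]
    _ = MulOpposite.op (Yprod L.reverse (listPerm L * 1 * Fin.revPerm)
          (fun i => (τ (Fin.revPerm i)).rev)) := rev_phi φ hφ L 1 Fin.revPerm ⇑τ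
    _ = MulOpposite.op (Y Fin.revPerm ⇑((Fin.revPerm * (τ * Fin.revPerm) : Equiv.Perm (Fin n)))) := by
          rw [hbase, hx, ← hrev1, Y_eq_Yprod hY hredrev]



/-- `σ` admits no descent-preserving exchange of consecutive values. -/
def Irr (σ : Equiv.Perm (Fin n)) : Prop :=
  ∀ p q : Fin n, p < q → ((σ q : Fin n) : ℕ) + 1 = ((σ p : Fin n) : ℕ) → (q : ℕ) = (p : ℕ) + 1

lemma irr_max {σ : Equiv.Perm (Fin n)} (hσ : Irr σ) (v p : Fin n) (hpv : σ p ≤ v)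
    (hcond : ∀ z : Fin n, (z : ℕ) + 1 = (p : ℕ) → (v < σ z ∨ σ z < σ p)) :
    p ≤ σ⁻¹ v := by
  by_contra hc
  push_neg at hc
  have hne : σ p ≠ v := by
    intro h
    rw [← h, Equiv.Perm.inv_apply_self] at hc
    exact absurd hc (lt_irrefl _)
  have hu : σ p < v := lt_of_le_of_ne hpv hne
  set W := Finset.univ.filter (fun w : Fin n => σ p < w ∧ w ≤ v ∧ σ⁻¹ w < p) with hW
  have hvW : v ∈ W := by
    simp only [hW, Finset.mem_filter, Finset.mem_univ, true_and]
    exact ⟨hu, le_refl _, hc⟩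
  have hWne : W.Nonempty := ⟨v, hvW⟩
  set w0 := W.min' hWne with hw0
  have hw0W : w0 ∈ W := W.min'_mem hWne
  simp only [hW, Finset.mem_filter, Finset.mem_univ, true_and] at hw0W
  obtain ⟨h1, h2, h3⟩ := hw0W
  have h1' : (σ p : ℕ) + 1 ≤ (w0 : ℕ) := by rw [Fin.lt_def] at h1; omega
  rcases eq_or_lt_of_le h1' with heq | hlt2
  · have hirr := hσ (σ⁻¹ w0) p h3
      (by rw [Equiv.Perm.apply_inv_self]; exact heq)
    rcases hcond (σ⁻¹ w0) hirr.symm with hcase | hcase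
    · rw [Equiv.Perm.apply_inv_self] at hcase
      exact absurd (lt_of_lt_of_le hcase h2) (lt_irrefl _)
    · rw [Equiv.Perm.apply_inv_self] at hcase
      exact absurd (h1.trans hcase) (lt_irrefl _)
  · have hw0n : (w0 : ℕ) < n := w0.2
    set w1 : Fin n := ⟨(w0 : ℕ) - 1, by omega⟩ with hw1def
    have hw1 : (w1 : ℕ) + 1 = (w0 : ℕ) := by simp only [hw1def]; omega
    have hw1u : σ p < w1 := by rw [Fin.lt_def]; simp only [hw1def]; omega
    have hw1v : w1 ≤ v := by
      rw [Fin.le_def] at h2 ⊢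
      simp only [hw1def]
      omega
    have hw1notW : ¬ (σ⁻¹ w1 < p) := by
      intro hcw
      have hmem : w1 ∈ W := by
        simp only [hW, Finset.mem_filter, Finset.mem_univ, true_and]
        exact ⟨hw1u, hw1v, hcw⟩
      have hle := W.min'_le w1 hmem
      rw [← hw0, Fin.le_def] at hle
      omega
    have hw1p : σ⁻¹ w1 ≠ p := by
      intro h
      have : σ p = w1 := by rw [← h, Equiv.Perm.apply_inv_self]
      rw [this] at hw1u
      exact absurd hw1u (lt_irrefl _)
    have hgt : p < σ⁻¹ w1 := lt_of_le_of_ne (not_lt.mp hw1notW) (Ne.symm hw1p)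
    have hirr := hσ (σ⁻¹ w0) (σ⁻¹ w1) (h3.trans hgt)
      (by rw [Equiv.Perm.apply_inv_self, Equiv.Perm.apply_inv_self]; exact hw1)
    rw [Fin.lt_def] at h3 hgt
    omega

lemma irr_le {a b : Equiv.Perm (Fin n)} (hb : Irr b)
    (hd : ∀ i, descPerm b i → descPerm a i)
    (v : Fin n) (IH : ∀ w, v < w → a⁻¹ w = b⁻¹ w) : a⁻¹ v ≤ b⁻¹ v := by
  set pa := a⁻¹ v with hpa
  have hapa : a pa = v := by rw [hpa, Equiv.Perm.apply_inv_self]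
  have h1 : b pa ≤ v := by
    by_contra hcc
    push_neg at hcc
    have hIH := IH (b pa) hcc
    rw [Equiv.Perm.inv_apply_self] at hIH
    have : a pa = b pa := by
      conv_lhs => rw [← hIH]
      rw [Equiv.Perm.apply_inv_self]
    rw [hapa] at this
    rw [← this] at hcc
    exact absurd hcc (lt_irrefl _)
  have h2 : ∀ z : Fin n, (z : ℕ) + 1 = (pa : ℕ) → v < b z ∨ b z < b pa := by
    intro z hz
    rcases lt_or_ge v (b z) with h | h
    · exact Or.inl h
    · right
      have hzpa : z ≠ pa := by intro hh; rw [hh] at hz; omega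
      have haz : a z < a pa := by
        rcases lt_or_ge v (a z) with hw | hw
        · exfalso
          have hIH := IH (a z) hw
          rw [Equiv.Perm.inv_apply_self] at hIH
          have hba : b z = a z := by
            conv_lhs => rw [hIH]
            rw [Equiv.Perm.apply_inv_self]
          rw [hba] at h
          exact absurd (lt_of_le_of_lt h hw) (lt_irrefl _)
        · rw [hapa]
          exact lt_of_le_of_ne hw (fun hh => hzpa (by rw [← hapa] at hh; exact a.injective hh))
      have hval : (z : ℕ) + 1 < n := by rw [hz]; exact pa.2
      have hnd : ¬ descPerm a (z : ℕ) := by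
        rintro ⟨hh, hlt⟩
        have e1 : (⟨(z : ℕ) + 1, hh⟩ : Fin n) = pa := Fin.ext hz
        have e2 : (⟨(z : ℕ), by omega⟩ : Fin n) = z := Fin.ext rfl
        rw [e1, e2] at hlt
        exact absurd (haz.trans hlt) (lt_irrefl _)
      have hndb : ¬ descPerm b (z : ℕ) := fun hdb => hnd (hd _ hdb)
      unfold descPerm at hndb
      push_neg at hndb
      have hle := hndb hval
      have e1 : (⟨(z : ℕ) + 1, hval⟩ : Fin n) = pa := Fin.ext hz
      have e2 : (⟨(z : ℕ), by omega⟩ : Fin n) = z := Fin.ext rfl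
      rw [e1, e2] at hle
      exact lt_of_le_of_ne hle (fun hh => hzpa (b.injective hh))
  have := irr_max hb v pa h1 h2
  exact this

lemma irr_unique {a b : Equiv.Perm (Fin n)} (ha : Irr a) (hb : Irr b)
    (hd : ∀ i, descPerm a i ↔ descPerm b i) : a = b := by
  have key : ∀ k : ℕ, ∀ v : Fin n, n - 1 - (v : ℕ) ≤ k → a⁻¹ v = b⁻¹ v := by
    intro k
    induction k with
    | zero =>
      intro v hv
      have hIH : ∀ w : Fin n, v < w → a⁻¹ w = b⁻¹ w := by
        intro w hw
        exfalso
        rw [Fin.lt_def] at hw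
        have := w.2
        have := v.2
        omega
      exact le_antisymm (irr_le hb (fun i => (hd i).mpr) v hIH)
        (irr_le ha (fun i => (hd i).mp) v (fun w hw => (hIH w hw).symm))
    | succ k ih =>
      intro v hv
      have hIH : ∀ w : Fin n, v < w → a⁻¹ w = b⁻¹ w := by
        intro w hw
        apply ih
        rw [Fin.lt_def] at hw
        have := w.2
        omega
      exact le_antisymm (irr_le hb (fun i => (hd i).mpr) v hIH)
        (irr_le ha (fun i => (hd i).mp) v (fun w hw => (hIH w hw).symm))
  have hinv : a⁻¹ = b⁻¹ := Equiv.ext (fun v => key n v (by omega))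
  have := congrArg (·⁻¹) hinv
  simpa using this


/-! ### Exchanging two consecutive values sitting at non-adjacent positions -/

lemma swap_consec_iff {v v' : Fin n} (hv : (v : ℕ) + 1 = (v' : ℕ)) {x y : Fin n} (hne : x ≠ y)
    (h1 : ¬(x = v ∧ y = v')) (h2 : ¬(y = v ∧ x = v')) :
    (Equiv.swap v v' y < Equiv.swap v v' x ↔ y < x) := by
  rcases hne.lt_or_gt with h | h
  · constructor
    · intro hc
      exact absurd ((swap_consec_lt hv h).mp hc) h1
    · intro hc
      exact absurd (h.trans hc) (lt_irrefl _)
  · constructor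
    · intro _
      exact h
    · intro _
      rcases lt_trichotomy (Equiv.swap v v' y) (Equiv.swap v v' x) with hc | hc | hc
      · exact hc
      · exact absurd ((Equiv.swap v v').injective hc) hne.symm
      · exact absurd ((swap_consec_lt hv h).mp hc) h2

lemma cmp_of_swap {σ : Equiv.Perm (Fin n)} {p q : Fin n}
    (hval : ((σ q : Fin n) : ℕ) + 1 = ((σ p : Fin n) : ℕ))
    {s t : Fin n} (hst : s ≠ t) (h1 : ¬(s = p ∧ t = q)) (h2 : ¬(t = p ∧ s = q)) :
    (σ s ≤ σ t ↔ (Equiv.swap (σ q) (σ p) * σ) s ≤ (Equiv.swap (σ q) (σ p) * σ) t) := by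
  rw [← not_lt, ← not_lt, Equiv.Perm.mul_apply, Equiv.Perm.mul_apply]
  apply not_congr
  refine ((swap_consec_iff hval (x := σ s) (y := σ t) ?_ ?_ ?_)).symm
  · exact fun h => hst (σ.injective h)
  · rintro ⟨hc1, hc2⟩
    exact h2 ⟨σ.injective hc2, σ.injective hc1⟩
  · rintro ⟨hc1, hc2⟩
    exact h1 ⟨σ.injective hc2, σ.injective hc1⟩

lemma Ygen_congr (j : ℕ) (h : j + 1 < n) {t u t' u' : Fin n} (hiff : t ≤ u ↔ t' ≤ u') :
    Ygen j h t u = Ygen j h t' u' := by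
  unfold Ygen
  exact if_congr hiff rfl rfl

lemma Yprod_congr {L : List (Lam n)} {ρ : Equiv.Perm (Fin n)} (hred : Red L ρ)
    {x y : Fin n → Fin n}
    (H : ∀ u v : Fin n, u < v → (u, v) ∈ InvP (listPerm L * ρ) → (u, v) ∉ InvP ρ →
      (x u ≤ x v ↔ y u ≤ y v)) :
    Yprod L ρ x = Yprod L ρ y := by
  induction L with
  | nil => rfl
  | cons a L ih =>
    obtain ⟨h1, h2⟩ := red_cons hred
    have hsub : InvP (listPerm L * ρ) ⊆ InvP (listPerm (a :: L) * ρ) := by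
      rw [listPerm_cons, mul_assoc, swl_eq, invP_vswap (jf_consec a) _ h2]
      exact Finset.subset_insert _ _
    have hmem : ((listPerm L * ρ)⁻¹ (jf a), (listPerm L * ρ)⁻¹ (j1f a)) ∈
        InvP (listPerm (a :: L) * ρ) := by
      rw [listPerm_cons, mul_assoc, swl_eq, invP_vswap (jf_consec a) _ h2]
      exact Finset.mem_insert_self _ _
    have hnot : ((listPerm L * ρ)⁻¹ (jf a), (listPerm L * ρ)⁻¹ (j1f a)) ∉ InvP ρ := by
      intro hmemρ
      have hin := invP_mono_chain h1 hmemρ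
      simp only [InvP, Finset.mem_filter, Finset.mem_univ, true_and] at hin
      rw [Equiv.Perm.apply_inv_self, Equiv.Perm.apply_inv_self] at hin
      exact absurd ((jf_lt_j1f a).trans hin.2) (lt_irrefl _)
    rw [Yprod_cons, Yprod_cons, ih h1 (fun u v huv hm hn => H u v huv (hsub hm) hn)]
    congr 1
    exact Ygen_congr _ _ (H _ _ h2 hmem hnot)

lemma swap_invnum (σ : Equiv.Perm (Fin n)) {p q : Fin n} (hlt : p < q)
    (hval : ((σ q : Fin n) : ℕ) + 1 = ((σ p : Fin n) : ℕ)) :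
    invnum σ = invnum (Equiv.swap (σ q) (σ p) * σ) + 1 := by
  set σ' := Equiv.swap (σ q) (σ p) * σ with hσ'
  have hs : Equiv.swap (σ q) (σ p) * σ' = σ := by
    rw [hσ', ← mul_assoc, Equiv.swap_mul_self, one_mul]
  have e1 : σ' p = σ q := by rw [hσ', Equiv.Perm.mul_apply, Equiv.swap_apply_right]
  have e2 : σ' q = σ p := by rw [hσ', Equiv.Perm.mul_apply, Equiv.swap_apply_left]
  have h1 : σ'⁻¹ (σ q) = p := by rw [← e1, Equiv.Perm.inv_apply_self]
  have h2 : σ'⁻¹ (σ p) = q := by rw [← e2, Equiv.Perm.inv_apply_self]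
  conv_lhs => rw [← hs]
  exact inv_vswap_step hval σ' (by rw [h1, h2]; exact hlt)

lemma swap_desc (σ : Equiv.Perm (Fin n)) {p q : Fin n} (hgap : (p : ℕ) + 2 ≤ (q : ℕ))
    (hval : ((σ q : Fin n) : ℕ) + 1 = ((σ p : Fin n) : ℕ)) (i : ℕ) :
    descPerm σ i ↔ descPerm (Equiv.swap (σ q) (σ p) * σ) i := by
  unfold descPerm
  apply exists_congr
  intro h
  rw [Equiv.Perm.mul_apply, Equiv.Perm.mul_apply]
  symm
  apply swap_consec_iff hval
  · intro hc
    have : (⟨i, by omega⟩ : Fin n) = ⟨i + 1, h⟩ := σ.injective hc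
    simp [Fin.ext_iff] at this
  · rintro ⟨hc1, hc2⟩
    have e1 : (⟨i, by omega⟩ : Fin n) = q := σ.injective hc1
    have e2 : (⟨i + 1, h⟩ : Fin n) = p := σ.injective hc2
    have v1 : (q : ℕ) = i := by rw [← e1]
    have v2 : (p : ℕ) = i + 1 := by rw [← e2]
    omega
  · rintro ⟨hc1, hc2⟩
    have e1 : (⟨i + 1, h⟩ : Fin n) = q := σ.injective hc1
    have e2 : (⟨i, by omega⟩ : Fin n) = p := σ.injective hc2
    have v1 : (q : ℕ) = i + 1 := by rw [← e1]
    have v2 : (p : ℕ) = i := by rw [← e2]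
    omega

lemma invnum_zero_eq_one {σ : Equiv.Perm (Fin n)} (h : invnum σ = 0) : σ = 1 := by
  by_contra hne
  obtain ⟨a, τ, h1, h2⟩ := exists_peel hne
  omega

lemma swap_Y {Y : Equiv.Perm (Fin n) → (Fin n → Fin n) → H n} (hY : IsYBFamily Y)
    (σ : Equiv.Perm (Fin n)) (p q : Fin n) (hgap : (p : ℕ) + 2 ≤ (q : ℕ))
    (hval : ((σ q : Fin n) : ℕ) + 1 = ((σ p : Fin n) : ℕ)) :
    Y Fin.revPerm ⇑σ = Y Fin.revPerm ⇑(Equiv.swap (σ q) (σ p) * σ) := by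
  have hq2 : 2 ≤ (q : ℕ) := by omega
  have hn3 : 2 < n := lt_of_le_of_lt hq2 q.2
  have ha0p : (0 : ℕ) + 1 < n := by omega
  have ha1p : (1 : ℕ) + 1 < n := by omega
  have hrp : (p : ℕ) + 1 < n := by omega
  obtain ⟨a0, ha0⟩ : ∃ a0 : Lam n, a0 = (⟨0, ha0p⟩ : Lam n) := ⟨_, rfl⟩
  obtain ⟨a1, ha1⟩ : ∃ a1 : Lam n, a1 = (⟨1, ha1p⟩ : Lam n) := ⟨_, rfl⟩
  obtain ⟨F0, hF0⟩ : ∃ F0 : Fin n, F0 = (⟨0, by omega⟩ : Fin n) := ⟨_, rfl⟩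
  obtain ⟨F1, hF1⟩ : ∃ F1 : Fin n, F1 = (⟨1, by omega⟩ : Fin n) := ⟨_, rfl⟩
  obtain ⟨F2, hF2⟩ : ∃ F2 : Fin n, F2 = (⟨2, by omega⟩ : Fin n) := ⟨_, rfl⟩
  obtain ⟨r, hrdef⟩ : ∃ r : Fin n, r = (⟨(p : ℕ) + 1, hrp⟩ : Fin n) := ⟨_, rfl⟩
  have hrval : (r : ℕ) = (p : ℕ) + 1 := by rw [hrdef]
  have hplt : p < q := by rw [Fin.lt_def]; omega
  have hprlt : p < r := by rw [Fin.lt_def]; omega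
  have hrqlt : r < q := by rw [Fin.lt_def]; omega
  have hpr : p ≠ r := ne_of_lt hprlt
  have hrq : r ≠ q := ne_of_lt hrqlt
  have hpq : p ≠ q := ne_of_lt hplt
  have hjfa0 : jf a0 = F0 := by rw [ha0, hF0]; rfl
  have hj1fa0 : j1f a0 = F1 := by rw [ha0, hF1]; rfl
  have hjfa1 : jf a1 = F1 := by rw [ha1, hF1]; rfl
  have hj1fa1 : j1f a1 = F2 := by rw [ha1, hF2]; rfl
  have hF0F2 : F0 ≠ F2 := by rw [hF0, hF2]; simp [Fin.ext_iff]
  have hF0F1 : F0 ≠ F1 := by rw [hF0, hF1]; simp [Fin.ext_iff]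
  have hF1F2 : F1 ≠ F2 := by rw [hF1, hF2]; simp [Fin.ext_iff]
  have hF0q : F0 ≠ q := by rw [hF0]; exact Fin.ne_of_val_ne (by simp; omega)
  have hF0r : F0 ≠ r := by rw [hF0]; exact Fin.ne_of_val_ne (by simp; omega)
  have hF1q : F1 ≠ q := by rw [hF1]; exact Fin.ne_of_val_ne (by simp; omega)
  have hF0p' : q ≠ F0 := Ne.symm hF0q
  -- auxiliary permutation μ with μ F0 = p, μ F1 = r, μ F2 = q
  obtain ⟨μ, hμ0, hμ1, hμ2⟩ : ∃ μ : Equiv.Perm (Fin n), μ F0 = p ∧ μ F1 = r ∧ μ F2 = q := by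
    refine ⟨Equiv.swap F0 p * (Equiv.swap F1 r * Equiv.swap F2 q), ?_, ?_, ?_⟩
    · rw [Equiv.Perm.mul_apply, Equiv.Perm.mul_apply,
        Equiv.swap_apply_of_ne_of_ne hF0F2 hF0q,
        Equiv.swap_apply_of_ne_of_ne hF0F1 hF0r,
        Equiv.swap_apply_left]
    · rw [Equiv.Perm.mul_apply, Equiv.Perm.mul_apply,
        Equiv.swap_apply_of_ne_of_ne hF1F2 hF1q,
        Equiv.swap_apply_left,
        Equiv.swap_apply_of_ne_of_ne (Ne.symm hF0r) (Ne.symm hpr)]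
    · rw [Equiv.Perm.mul_apply, Equiv.Perm.mul_apply, Equiv.swap_apply_left,
        Equiv.swap_apply_of_ne_of_ne (Ne.symm hF1q) (Ne.symm hrq),
        Equiv.swap_apply_of_ne_of_ne (Ne.symm hF0q) (Ne.symm hpq)]
  obtain ⟨τ, hτdef⟩ : ∃ τ : Equiv.Perm (Fin n), τ = μ⁻¹ := ⟨_, rfl⟩
  have hτinv : τ⁻¹ = μ := by rw [hτdef]; exact _root_.inv_inv μ
  have hτp : τ p = F0 := by rw [hτdef, ← hμ0, Equiv.Perm.inv_apply_self]
  have hτr : τ r = F1 := by rw [hτdef, ← hμ1, Equiv.Perm.inv_apply_self]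
  have hτq : τ q = F2 := by rw [hτdef, ← hμ2, Equiv.Perm.inv_apply_self]
  have hswl0 : swl a0 = Equiv.swap F0 F1 := by rw [swl_eq, hjfa0, hj1fa0]
  have hswl1 : swl a1 = Equiv.swap F1 F2 := by rw [swl_eq, hjfa1, hj1fa1]
  -- the three chain steps
  obtain ⟨τA, hτA⟩ : ∃ τA : Equiv.Perm (Fin n), τA = swl a0 * τ := ⟨_, rfl⟩
  obtain ⟨τB, hτB⟩ : ∃ τB : Equiv.Perm (Fin n), τB = swl a1 * τA := ⟨_, rfl⟩
  obtain ⟨τ3, hτ3⟩ : ∃ τ3 : Equiv.Perm (Fin n), τ3 = swl a0 * τB := ⟨_, rfl⟩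
  have hτAinv : ∀ w, τA⁻¹ w = μ (Equiv.swap F0 F1 w) := by
    intro w
    rw [hτA, mul_inv_rev, Equiv.Perm.mul_apply, swl_inv, hswl0, hτinv]
  have hτBinv : ∀ w, τB⁻¹ w = τA⁻¹ (Equiv.swap F1 F2 w) := by
    intro w
    rw [hτB, mul_inv_rev, Equiv.Perm.mul_apply, swl_inv, hswl1]
  have cA1 : τA⁻¹ F1 = p := by rw [hτAinv, Equiv.swap_apply_right, hμ0]
  have cA2 : τA⁻¹ F2 = q := by
    rw [hτAinv, Equiv.swap_apply_of_ne_of_ne (Ne.symm hF0F2) (Ne.symm hF1F2), hμ2]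
  have cA0 : τA⁻¹ F0 = r := by rw [hτAinv, Equiv.swap_apply_left, hμ1]
  have cB0 : τB⁻¹ F0 = r := by
    rw [hτBinv, Equiv.swap_apply_of_ne_of_ne hF0F1 hF0F2, cA0]
  have cB1 : τB⁻¹ F1 = q := by rw [hτBinv, Equiv.swap_apply_left, cA2]
  have step1 : invnum τA = invnum τ + 1 := by
    rw [hτA]
    exact inv_step a0 τ (by rw [hjfa0, hj1fa0, hτinv, hμ0, hμ1]; exact hprlt)
  have step2 : invnum τB = invnum τA + 1 := by
    rw [hτB]
    exact inv_step a1 τA (by rw [hjfa1, hj1fa1, cA1, cA2]; exact hplt)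
  have step3 : invnum τ3 = invnum τB + 1 := by
    rw [hτ3]
    exact inv_step a0 τB (by rw [hjfa0, hj1fa0, cB0, cB1]; exact hrqlt)
  have hinv3 : invnum τ3 = invnum τ + 3 := by omega
  -- τ3 on p, q
  have hτ3p : τ3 p = F2 := by
    rw [hτ3, hτB, hτA, Equiv.Perm.mul_apply, Equiv.Perm.mul_apply, Equiv.Perm.mul_apply,
      hτp, hswl0, hswl1, Equiv.swap_apply_left, Equiv.swap_apply_left,
      Equiv.swap_apply_of_ne_of_ne (Ne.symm hF0F2) (Ne.symm hF1F2)]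
  have hτ3q : τ3 q = F0 := by
    rw [hτ3, hτB, hτA, Equiv.Perm.mul_apply, Equiv.Perm.mul_apply, Equiv.Perm.mul_apply,
      hτq, hswl0, hswl1, Equiv.swap_apply_of_ne_of_ne (Ne.symm hF0F2) (Ne.symm hF1F2),
      Equiv.swap_apply_right, Equiv.swap_apply_right]
  have hF0F2lt : F0 < F2 := by rw [hF0, hF2]; simp [Fin.lt_def]
  have hpq_in3 : (p, q) ∈ InvP τ3 := by
    simp only [InvP, Finset.mem_filter, Finset.mem_univ, true_and]
    refine ⟨hplt, ?_⟩
    rw [hτ3p, hτ3q]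
    exact hF0F2lt
  have hpq_notτ : (p, q) ∉ InvP τ := by
    simp only [InvP, Finset.mem_filter, Finset.mem_univ, true_and, not_and]
    intro _
    rw [hτp, hτq]
    exact asymm hF0F2lt
  -- words
  obtain ⟨Wt, hWt1, hWt2⟩ := exists_word τ
  obtain ⟨W3, hW31, hW32⟩ := exists_word ((Fin.revPerm : Equiv.Perm (Fin n)) * τ3⁻¹)
  obtain ⟨M, hMdef⟩ : ∃ M : List (Lam n), M = [a0, a1, a0] := ⟨_, rfl⟩
  have hLPM : listPerm M = swl a0 * (swl a1 * swl a0) := by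
    rw [hMdef]; simp [listPerm, mul_assoc]
  have hMW : listPerm (M ++ Wt) = τ3 := by
    rw [listPerm_append, hLPM, hWt1, hτ3, hτB, hτA, mul_assoc, mul_assoc]
  have hLP : listPerm (W3 ++ (M ++ Wt)) = Fin.revPerm := by
    rw [listPerm_append, hW31, hMW, inv_mul_cancel_right]
  have hNN := invP_rev_mul (τ3⁻¹)
  rw [invnum_inv] at hNN
  have hlen : invnum (Fin.revPerm : Equiv.Perm (Fin n)) = (W3 ++ (M ++ Wt)).length := by
    simp only [List.length_append, hMdef, List.length_cons, List.length_nil]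
    omega
  have hred : Red (W3 ++ (M ++ Wt)) 1 := red_of_word hLP hlen
  have hbase1 : listPerm (M ++ Wt) * 1 = τ3 := by rw [hMW, mul_one]
  have hbase2 : listPerm Wt * 1 = τ := by rw [hWt1, mul_one]
  have hform : ∀ x, Y Fin.revPerm x = Yprod W3 τ3 x * (Yprod M τ x * Yprod Wt 1 x) := by
    intro x
    rw [← hLP, Y_eq_Yprod hY hred, Yprod_append, Yprod_append, hbase1, hbase2]
  obtain ⟨σ', hσ'def⟩ : ∃ σ' : Equiv.Perm (Fin n), σ' = Equiv.swap (σ q) (σ p) * σ := ⟨_, rfl⟩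
  rw [← hσ'def]
  have hσrq : σ r ≠ σ q := fun h => hrq (σ.injective h)
  have hσrp : σ r ≠ σ p := fun h => hpr (σ.injective h).symm
  -- part A
  have hRedW3 : Red W3 τ3 := by
    unfold Red
    rw [hW31, inv_mul_cancel_right]
    omega
  have hA : Yprod W3 τ3 ⇑σ = Yprod W3 τ3 ⇑σ' := by
    apply Yprod_congr hRedW3
    intro u v huv hmemI hmemN
    rw [hσ'def]
    apply cmp_of_swap hval (ne_of_lt huv)
    · rintro ⟨e1, e2⟩
      rw [e1, e2] at hmemN
      exact hmemN hpq_in3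
    · rintro ⟨e1, e2⟩
      rw [e1, e2] at huv
      exact absurd (hplt.trans huv) (lt_irrefl _)
  -- part B
  have hRedWt : Red Wt 1 := red_of_word hWt1 hWt2
  have hB : Yprod Wt 1 ⇑σ = Yprod Wt 1 ⇑σ' := by
    apply Yprod_congr hRedWt
    intro u v huv hmemI hmemN
    rw [hbase2] at hmemI
    rw [hσ'def]
    apply cmp_of_swap hval (ne_of_lt huv)
    · rintro ⟨e1, e2⟩
      rw [e1, e2] at hmemI
      exact hpq_notτ hmemI
    · rintro ⟨e1, e2⟩
      rw [e1, e2] at huv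
      exact absurd (hplt.trans huv) (lt_irrefl _)
  -- middle part
  have hLPa0 : listPerm [a0] = swl a0 := by simp [listPerm]
  have hLPa10 : listPerm [a1, a0] = swl a1 * swl a0 := by simp [listPerm, mul_assoc]
  have c1 : (listPerm ([] : List (Lam n)) * τ)⁻¹ (jf a0) = p := by
    rw [listPerm_nil, one_mul, hjfa0, hτinv, hμ0]
  have c2 : (listPerm ([] : List (Lam n)) * τ)⁻¹ (j1f a0) = r := by
    rw [listPerm_nil, one_mul, hj1fa0, hτinv, hμ1]
  have c3 : (listPerm [a0] * τ)⁻¹ (jf a1) = p := by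
    rw [hLPa0, ← hτA, hjfa1, cA1]
  have c4 : (listPerm [a0] * τ)⁻¹ (j1f a1) = q := by
    rw [hLPa0, ← hτA, hj1fa1, cA2]
  have c5 : (listPerm [a1, a0] * τ)⁻¹ (jf a0) = r := by
    rw [hLPa10, mul_assoc, ← hτA, ← hτB, hjfa0, cB0]
  have c6 : (listPerm [a1, a0] * τ)⁻¹ (j1f a0) = q := by
    rw [hLPa10, mul_assoc, ← hτA, ← hτB, hj1fa0, cB1]
  have hv'p : σ' p = σ q := by rw [hσ'def, Equiv.Perm.mul_apply, Equiv.swap_apply_right]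
  have hv'q : σ' q = σ p := by rw [hσ'def, Equiv.Perm.mul_apply, Equiv.swap_apply_left]
  have hv'r : σ' r = σ r := by
    rw [hσ'def, Equiv.Perm.mul_apply, Equiv.swap_apply_of_ne_of_ne hσrq hσrp]
  have hMid : Yprod M τ ⇑σ = Yprod M τ ⇑σ' := by
    rw [hMdef]
    simp only [Yprod_cons, Yprod_nil]
    rw [c1, c2, c3, c4, c5, c6, hv'p, hv'q, hv'r]
    have hvne1 : ((σ r : Fin n) : ℕ) ≠ ((σ q : Fin n) : ℕ) := fun h => hσrq (Fin.ext h)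
    have hvne2 : ((σ r : Fin n) : ℕ) ≠ ((σ p : Fin n) : ℕ) := fun h => hσrp (Fin.ext h)
    rcases le_or_gt (σ r) (σ q) with he | he
    · have heval : ((σ r : Fin n) : ℕ) ≤ ((σ q : Fin n) : ℕ) := he
      have b1 : σ r ≤ σ q := he
      have b2 : ¬ (σ p ≤ σ q) := by rw [Fin.le_def]; omega
      have b3 : ¬ (σ p ≤ σ r) := by rw [Fin.le_def]; omega
      have b4 : σ r ≤ σ p := by rw [Fin.le_def]; omega
      have b5 : σ q ≤ σ p := by rw [Fin.le_def]; omega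
      have b6 : ¬ (σ q ≤ σ r) := by rw [Fin.le_def]; omega
      simp only [Ygen]
      rw [if_pos b1, if_neg b2, if_neg b3, if_pos b4, if_pos b5, if_neg b6]
      have key : (1 + Tpos a0.1 a0.2) * ((1 + Tpos a1.1 a1.2) * (Tpos a0.1 a0.2 * 1)) -
          (1 + Tpos a0.1 a0.2) * (Tpos a1.1 a1.2 * (Tpos a0.1 a0.2 * 1)) =
          (1 + Tpos a0.1 a0.2) * Tpos a0.1 a0.2 := by noncomm_ring
      rw [← sub_eq_zero, ← neg_sub, key, T_quad', neg_zero]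
    · have heval : ((σ q : Fin n) : ℕ) < ((σ r : Fin n) : ℕ) := he
      have b1 : ¬ (σ r ≤ σ q) := by rw [Fin.le_def]; omega
      have b2 : ¬ (σ p ≤ σ q) := by rw [Fin.le_def]; omega
      have b3 : σ p ≤ σ r := by rw [Fin.le_def]; omega
      have b4 : ¬ (σ r ≤ σ p) := by rw [Fin.le_def]; omega
      have b5 : σ q ≤ σ p := by rw [Fin.le_def]; omega
      have b6 : σ q ≤ σ r := by rw [Fin.le_def]; omega
      simp only [Ygen]
      rw [if_neg b1, if_neg b2, if_pos b3, if_neg b4, if_pos b5, if_pos b6]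
      have key : Tpos a0.1 a0.2 * ((1 + Tpos a1.1 a1.2) * ((1 + Tpos a0.1 a0.2) * 1)) -
          Tpos a0.1 a0.2 * (Tpos a1.1 a1.2 * ((1 + Tpos a0.1 a0.2) * 1)) =
          Tpos a0.1 a0.2 * (1 + Tpos a0.1 a0.2) := by noncomm_ring
      rw [← sub_eq_zero, ← neg_sub, key, T_quad, neg_zero]
  rw [hform ⇑σ, hform ⇑σ', hA, hB, hMid]

/-- `σ` admits no descent-preserving exchange of consecutive values. -/
def IrrP (σ : Equiv.Perm (Fin n)) : Prop := Irr σ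

lemma Y_desc {Y : Equiv.Perm (Fin n) → (Fin n → Fin n) → H n} (hY : IsYBFamily Y) :
    ∀ (m : ℕ) (a b : Equiv.Perm (Fin n)), invnum a + invnum b ≤ m →
      (∀ i, descPerm a i ↔ descPerm b i) → Y Fin.revPerm ⇑a = Y Fin.revPerm ⇑b := by
  intro m
  induction m with
  | zero =>
    intro a b hm hdesc
    have h1 : a = 1 := invnum_zero_eq_one (by omega)
    have h2 : b = 1 := invnum_zero_eq_one (by omega)
    rw [h1, h2]
  | succ m ih =>
    intro a b hm hdesc
    by_cases ha : Irr a
    · by_cases hb2 : Irr b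
      · rw [irr_unique ha hb2 hdesc]
      · unfold Irr at hb2
        push_neg at hb2
        obtain ⟨p, q, hlt, hval, hne⟩ := hb2
        have hgap : (p : ℕ) + 2 ≤ (q : ℕ) := by rw [Fin.lt_def] at hlt; omega
        rw [swap_Y hY b p q hgap hval]
        have hinv := swap_invnum b hlt hval
        exact ih a _ (by omega) (fun i => (hdesc i).trans (swap_desc b hgap hval i))
    · unfold Irr at ha
      push_neg at ha
      obtain ⟨p, q, hlt, hval, hne⟩ := ha
      have hgap : (p : ℕ) + 2 ≤ (q : ℕ) := by rw [Fin.lt_def] at hlt; omega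
      rw [swap_Y hY a p q hgap hval]
      have hinv := swap_invnum a hlt hval
      exact ih _ b (by omega) (fun i => ((swap_desc a hgap hval i).symm).trans (hdesc i))

lemma desc_conj (τ : Equiv.Perm (Fin n)) (i : ℕ) (hi : i + 1 < n) :
    descPerm (Fin.revPerm * (τ * Fin.revPerm)) i ↔ descPerm τ (n - 2 - i) := by
  have hlt : n - 2 - i + 1 < n := by omega
  have e1 : (Fin.revPerm (⟨i + 1, hi⟩ : Fin n)) = (⟨n - 2 - i, by omega⟩ : Fin n) := by
    apply Fin.ext
    rw [Fin.revPerm_apply, Fin.val_rev]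
    show n - (i + 1 + 1) = n - 2 - i
    omega
  have e2 : (Fin.revPerm (⟨i, by omega⟩ : Fin n)) = (⟨n - 2 - i + 1, hlt⟩ : Fin n) := by
    apply Fin.ext
    rw [Fin.revPerm_apply, Fin.val_rev]
    show n - (i + 1) = n - 2 - i + 1
    omega
  unfold descPerm
  constructor
  · rintro ⟨h, hd⟩
    refine ⟨hlt, ?_⟩
    rw [Equiv.Perm.mul_apply, Equiv.Perm.mul_apply, Equiv.Perm.mul_apply,
      Equiv.Perm.mul_apply, e1, e2, Fin.revPerm_apply, Fin.revPerm_apply,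
      Fin.rev_lt_rev] at hd
    exact hd
  · rintro ⟨h, hd⟩
    refine ⟨hi, ?_⟩
    rw [Equiv.Perm.mul_apply, Equiv.Perm.mul_apply, Equiv.Perm.mul_apply,
      Equiv.Perm.mul_apply, e1, e2, Fin.revPerm_apply, Fin.revPerm_apply,
      Fin.rev_lt_rev]
    exact hd


end Proofs

theorem antiAutomorphism_eta (n : ℕ)
    (Y : Equiv.Perm (Fin n) → (Fin n → Fin n) → H n) (hY : IsYBFamily Y)
    (φ : H n →ₐ[ℂ] (H n)ᵐᵒᵖ) (hφ : ∀ i, φ (Tgen i) = MulOpposite.op (Tgen i)) :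
    (∀ τ : Equiv.Perm (Fin n),
      φ (Y Fin.revPerm ⇑τ) =
        MulOpposite.op
          (Y Fin.revPerm ⇑((Fin.revPerm * (τ * Fin.revPerm) : Equiv.Perm (Fin n))))) ∧
    (∀ (I : Composition n) (τ τ' : Equiv.Perm (Fin n)),
      (∀ i : ℕ, i + 1 < n → (descComp I i ↔ descPerm τ (n - 2 - i))) →
      (∀ i : ℕ, i + 1 < n → (descComp I i ↔ descPerm τ' i)) →
      φ (Y Fin.revPerm ⇑τ) = MulOpposite.op (Y Fin.revPerm ⇑τ')) := by
  constructor
  · exact part1 hY φ hφ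
  · intro I τ τ' hIτ hIτ'
    rw [part1 hY φ hφ τ]
    congr 1
    apply Y_desc hY (invnum (Fin.revPerm * (τ * Fin.revPerm)) + invnum τ') _ _ le_rfl
    intro i
    by_cases hi : i + 1 < n
    · rw [desc_conj τ i hi]
      exact ((hIτ i hi).symm.trans (hIτ' i hi)).symm.symm |>.symm.symm |>.symm |>.symm
    · constructor
      · rintro ⟨h, -⟩
        exact absurd h hi
      · rintro ⟨h, -⟩
        exact absurd h hi

end

end AKSPaper
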